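/- Let E be a metric space. The space (UC_b(E), τ_K), where τ_K is the topology generated by p_{K,μ}(f) = sup_{x∈K}|f(x)| + |∫_E f dμ| over compact K and μ ∈ ca(E), is sequentially complete if and only if UC_b(E) = C_b(E). -/

import Mathlib

open Filter Topology MeasureTheory

/-- Integration of a function against a finite countably additive signed Borel measure,
via its Jordan decomposition. -/
noncomputable def intSM' {E : Type*} [MeasurableSpace E]
    (s : SignedMeasure E) (f : E → ℝ) : ℝ :=
  (∫ x, f x ∂s.toJordanDecomposition.posPart) -
    ∫ x, f x ∂s.toJordanDecomposition.negPart

/-- The locally convex topology τ_K on C_b(E). -/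
noncomputable def tauK (E : Type*) [MetricSpace E] [MeasurableSpace E] [BorelSpace E] :
    TopologicalSpace (BoundedContinuousFunction E ℝ) :=
  (⨅ (K : Set E) (_ : IsCompact K) (_ : K.Nonempty),
      TopologicalSpace.induced
        (fun f : BoundedContinuousFunction E ℝ => UniformFun.ofFun fun x : K => f x)
        inferInstance) ⊓
    ⨅ s : SignedMeasure E,
      TopologicalSpace.induced (fun f : BoundedContinuousFunction E ℝ => intSM' s ⇑f)
        inferInstance

/-!
`(C_b(E), τ_K)` is itself sequentially complete, and every `f ∈ C_b(E)` is the `τ_K`-limit of the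
Lipschitz functions `fₙ x = ⨅ y, f y + n * dist x y`; as `τ_K`-limits are pointwise limits, hence
unique, the theorem follows from these two facts.

Completeness: a `τ_K`-Cauchy sequence converges uniformly on compact sets, hence to a continuous
function since metric spaces are compactly generated. Testing it against the discrete measures
`∑ aₖ δ_{xₖ}` with `a ∈ ℓ¹` and applying the uniform boundedness principle on `ℓ¹` shows that it is
norm bounded, so the limit is bounded and dominated convergence gives convergence of the integrals.

Approximation: `fₙ` increases pointwise to `f`, so by Dini's theorem it converges uniformly on
compact sets, and `‖fₙ‖ ≤ ‖f‖`.
-/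

open BoundedContinuousFunction Set
open scoped ENNReal NNReal lp

section SignedIntegral

variable {E : Type*} [MeasurableSpace E]

lemma intSM'_zero (s : SignedMeasure E) : intSM' s 0 = 0 := by
  simp [intSM']

lemma intSM'_toSignedMeasure (μ : Measure E) [IsFiniteMeasure μ] (f : E → ℝ) :
    intSM' μ.toSignedMeasure f = ∫ x, f x ∂μ := by
  let j : JordanDecomposition E := ⟨μ, 0, .zero_right⟩
  have hj : μ.toSignedMeasure.toJordanDecomposition = j := by
    rw [← JordanDecomposition.toJordanDecomposition_toSignedMeasure j]
    simp [j, JordanDecomposition.toSignedMeasure, Measure.toSignedMeasure_zero]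
  simp [intSM', hj, j]

variable [TopologicalSpace E] [OpensMeasurableSpace E]

lemma intSM'_sub (s : SignedMeasure E) (f g : E →ᵇ ℝ) :
    intSM' s ⇑(f - g) = intSM' s ⇑f - intSM' s ⇑g := by
  simp only [intSM', coe_sub, Pi.sub_apply, integral_sub (f.integrable _) (g.integrable _)]
  ring

lemma tendsto_intSM'_of_tendsto {F : ℕ → E →ᵇ ℝ} {g : E →ᵇ ℝ} {M : ℝ} (hM : ∀ n, ‖F n‖ ≤ M)
    (hFg : ∀ x, Tendsto (fun n => F n x) atTop (𝓝 (g x))) (s : SignedMeasure E) :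
    Tendsto (fun n => intSM' s ⇑(F n)) atTop (𝓝 (intSM' s ⇑g)) := by
  have key (μ : Measure E) [IsFiniteMeasure μ] :
      Tendsto (fun n => ∫ x, F n x ∂μ) atTop (𝓝 (∫ x, g x ∂μ)) :=
    tendsto_integral_of_dominated_convergence (fun _ => M)
      (fun n => (F n).continuous.aestronglyMeasurable) (integrable_const M)
      (fun n => ae_of_all _ fun x => ((F n).norm_coe_le_norm x).trans (hM n)) (ae_of_all _ hFg)
  exact (key _).sub (key _)

end SignedIntegral

section TauK

variable {E : Type*} [MetricSpace E] [MeasurableSpace E] [BorelSpace E]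

lemma nhds_tauK (g : E →ᵇ ℝ) : @nhds _ (tauK E) g =
    (⨅ (K : Set E) (_ : IsCompact K) (_ : K.Nonempty),
      comap (fun f : E →ᵇ ℝ => UniformFun.ofFun fun x : K => f x)
        (𝓝 (UniformFun.ofFun fun x : K => g x))) ⊓
    ⨅ s : SignedMeasure E, comap (fun f : E →ᵇ ℝ => intSM' s ⇑f) (𝓝 (intSM' s ⇑g)) := by
  refine (@nhds_inf _ (⨅ (K : Set E) (_ : IsCompact K) (_ : K.Nonempty),
      TopologicalSpace.induced (fun f : E →ᵇ ℝ => UniformFun.ofFun fun x : K => f x)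
        inferInstance)
    (⨅ s : SignedMeasure E,
      TopologicalSpace.induced (fun f : E →ᵇ ℝ => intSM' s ⇑f) inferInstance) g).trans ?_
  simp only [nhds_iInf, nhds_induced]

lemma tendsto_tauK_iff {ι : Type*} {l : Filter ι} {F : ι → E →ᵇ ℝ} {g : E →ᵇ ℝ} :
    Tendsto F l (@nhds _ (tauK E) g) ↔
      (∀ K, IsCompact K → TendstoUniformlyOn (fun i => ⇑(F i)) g l K) ∧
        ∀ s : SignedMeasure E, Tendsto (fun i => intSM' s ⇑(F i)) l (𝓝 (intSM' s ⇑g)) := by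
  simp only [nhds_tauK, tendsto_inf, tendsto_iInf, tendsto_comap_iff,
    UniformFun.tendsto_iff_tendstoUniformly]
  refine and_congr_left' ⟨fun h K hK => ?_, fun h K hK _ =>
    tendstoUniformlyOn_iff_tendstoUniformly_comp_coe.1 (h K hK)⟩
  rcases K.eq_empty_or_nonempty with rfl | hne
  · exact tendstoUniformlyOn_empty
  · exact tendstoUniformlyOn_iff_tendstoUniformly_comp_coe.2 (h K hK hne)

variable (E) in
def TauKCauchySeq (F : ℕ → E →ᵇ ℝ) : Prop :=
  ∀ U ∈ @nhds _ (tauK E) 0, ∃ N : ℕ, ∀ m ≥ N, ∀ n ≥ N, F m - F n ∈ U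

lemma tauKCauchySeq_iff {F : ℕ → E →ᵇ ℝ} :
    TauKCauchySeq E F ↔ (∀ K, IsCompact K → UniformCauchySeqOn (fun n => ⇑(F n)) atTop K) ∧
      ∀ s : SignedMeasure E, CauchySeq fun n => intSM' s ⇑(F n) := by
  have : TauKCauchySeq E F ↔
      Tendsto (fun p : ℕ × ℕ => F p.1 - F p.2) atTop (@nhds _ (tauK E) 0) := by
    simp only [TauKCauchySeq, tendsto_def, ← eventually_mem_set (l := atTop),
      eventually_atTop_prod_self', Set.mem_preimage]
  rw [this, tendsto_tauK_iff]
  refine and_congr (forall₂_congr fun K _ => ?_) (forall_congr' fun s => ?_)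
  · simp only [Metric.tendstoUniformlyOn_iff, Metric.uniformCauchySeqOn_iff,
      eventually_atTop_prod_self', coe_sub, coe_zero, Pi.sub_apply, Pi.zero_apply,
      dist_eq_norm, zero_sub, norm_neg]
  · simp only [Metric.tendsto_nhds, Metric.cauchySeq_iff, eventually_atTop_prod_self',
      intSM'_sub, coe_zero, intSM'_zero, dist_eq_norm, sub_zero]

lemma TauKCauchySeq.of_tendsto {F : ℕ → E →ᵇ ℝ} {g : E →ᵇ ℝ}
    (h : Tendsto F atTop (@nhds _ (tauK E) g)) : TauKCauchySeq E F :=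
  tauKCauchySeq_iff.2 ⟨fun K hK => ((tendsto_tauK_iff.1 h).1 K hK).uniformCauchySeqOn,
    fun s => ((tendsto_tauK_iff.1 h).2 s).cauchySeq⟩

lemma tendsto_apply_of_tendsto_tauK {ι : Type*} {l : Filter ι} {F : ι → E →ᵇ ℝ}
    {g : E →ᵇ ℝ} (h : Tendsto F l (@nhds _ (tauK E) g)) (x : E) :
    Tendsto (fun i => F i x) l (𝓝 (g x)) :=
  ((tendsto_tauK_iff.1 h).1 {x} isCompact_singleton).tendsto_at rfl

lemma tendsto_tauK_of_tendstoUniformlyOn {F : ℕ → E →ᵇ ℝ} {g : E →ᵇ ℝ} {M : ℝ}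
    (hM : ∀ n, ‖F n‖ ≤ M)
    (hFg : ∀ K, IsCompact K → TendstoUniformlyOn (fun n => ⇑(F n)) g atTop K) :
    Tendsto F atTop (@nhds _ (tauK E) g) :=
  tendsto_tauK_iff.2 ⟨hFg, tendsto_intSM'_of_tendsto hM fun x =>
    (hFg {x} isCompact_singleton).tendsto_at rfl⟩

end TauK

section LipschitzApprox

variable {E : Type*} [PseudoMetricSpace E] (f : E →ᵇ ℝ)

noncomputable def lipschitzApprox (n : ℕ) (x : E) : ℝ :=
  ⨅ y, f y + n * dist x y

lemma neg_norm_le_add_mul_dist (n : ℕ) (x y : E) : -‖f‖ ≤ f y + n * dist x y := by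
  have := neg_le_of_abs_le (f.norm_coe_le_norm y)
  have : 0 ≤ n * dist x y := by positivity
  linarith

lemma bddBelow_range_add_mul_dist (n : ℕ) (x : E) :
    BddBelow (range fun y => f y + n * dist x y) :=
  ⟨-‖f‖, forall_mem_range.2 (neg_norm_le_add_mul_dist f n x)⟩

lemma lipschitzApprox_le_add_mul_dist (n : ℕ) (x y : E) :
    lipschitzApprox f n x ≤ f y + n * dist x y :=
  ciInf_le (bddBelow_range_add_mul_dist f n x) y

lemma lipschitzApprox_le (n : ℕ) (x : E) : lipschitzApprox f n x ≤ f x := by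
  simpa using lipschitzApprox_le_add_mul_dist f n x x

lemma monotone_lipschitzApprox : Monotone (lipschitzApprox f) := fun m n hmn x =>
  ciInf_mono (bddBelow_range_add_mul_dist f m x) fun y => by gcongr

lemma abs_lipschitzApprox_le (n : ℕ) (x : E) : |lipschitzApprox f n x| ≤ ‖f‖ :=
  have : Nonempty E := ⟨x⟩
  abs_le.2 ⟨le_ciInf (neg_norm_le_add_mul_dist f n x),
    (lipschitzApprox_le f n x).trans ((le_abs_self _).trans (f.norm_coe_le_norm x))⟩

lemma lipschitzWith_lipschitzApprox (n : ℕ) : LipschitzWith n (lipschitzApprox f n) := by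
  refine LipschitzWith.of_le_add_mul _ fun x x' => ?_
  have : Nonempty E := ⟨x⟩
  rw [← sub_le_iff_le_add]
  refine le_ciInf fun y => ?_
  have := lipschitzApprox_le_add_mul_dist f n x y
  have := mul_le_mul_of_nonneg_left (dist_triangle x x' y) n.cast_nonneg
  push_cast
  linarith

lemma tendsto_lipschitzApprox (x : E) :
    Tendsto (fun n => lipschitzApprox f n x) atTop (𝓝 (f x)) := by
  have : Nonempty E := ⟨x⟩
  refine tendsto_order.2 ⟨fun a ha => ?_, fun a ha =>
    Eventually.of_forall fun n => (lipschitzApprox_le f n x).trans_lt ha⟩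
  obtain ⟨b, hab, hb⟩ := exists_between ha
  obtain ⟨δ, hδ, hfδ⟩ := Metric.eventually_nhds_iff.1
    ((f.continuous.tendsto x).eventually (lt_mem_nhds hb))
  obtain ⟨N, hN⟩ := exists_nat_ge (2 * ‖f‖ / δ)
  filter_upwards [eventually_ge_atTop N] with n hn
  refine hab.trans_le (le_ciInf fun y => ?_)
  have hny : 0 ≤ n * dist x y := by positivity
  rcases lt_or_ge (dist y x) δ with hy | hy
  · linarith [hfδ hy]
  -- far from `x`, the penalty `n * dist x y` exceeds the oscillation `2 * ‖f‖` of `f`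
  have : 2 * ‖f‖ ≤ n * dist x y := by
    rw [div_le_iff₀ hδ] at hN
    calc 2 * ‖f‖ ≤ N * δ := hN
      _ ≤ n * dist x y := by rw [dist_comm]; gcongr
  linarith [le_of_abs_le (f.norm_coe_le_norm x), neg_le_of_abs_le (f.norm_coe_le_norm y)]

end LipschitzApprox

lemma Summable.posPart {ι : Type*} {c : ι → ℝ} (hc : Summable c) :
    Summable fun k => (c k)⁺ :=
  (summable_abs_iff.2 hc).of_nonneg_of_le (fun k => posPart_nonneg _) fun k => by
    rw [← posPart_add_negPart]
    exact le_add_of_nonneg_right (negPart_nonneg _)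

lemma Summable.negPart {ι : Type*} {c : ι → ℝ} (hc : Summable c) :
    Summable fun k => (c k)⁻ :=
  (summable_abs_iff.2 hc).of_nonneg_of_le (fun k => negPart_nonneg _) fun k => by
    rw [← posPart_add_negPart]
    exact le_add_of_nonneg_left (posPart_nonneg _)

noncomputable def lpPairing : lp (fun _ : ℕ => ℝ) ∞ →L[ℝ] lp (fun _ : ℕ => ℝ) 1 →L[ℝ] ℝ :=
  lp.dualPairing ∞ 1 (fun _ => ContinuousLinearMap.mul ℝ ℝ) (K := 1)
    fun _ => ContinuousLinearMap.opNorm_mul_le ℝ ℝ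

lemma lpPairing_apply (b : lp (fun _ : ℕ => ℝ) ∞) (c : lp (fun _ : ℕ => ℝ) 1) :
    lpPairing b c = ∑' k, b k * c k :=
  lp.dualPairing_apply ..

lemma norm_apply_le_norm_lpPairing (b : lp (fun _ : ℕ => ℝ) ∞) (k : ℕ) :
    ‖b k‖ ≤ ‖lpPairing b‖ := by
  have h : lpPairing b (lp.single 1 k 1) = b k := by
    rw [lpPairing_apply, tsum_eq_single k fun j hj => by simp [hj]]
    simp
  calc ‖b k‖ = ‖lpPairing b (lp.single 1 k 1)‖ := by rw [h]
    _ ≤ ‖lpPairing b‖ * ‖lp.single (E := fun _ : ℕ => ℝ) 1 k (1 : ℝ)‖ := (lpPairing b).le_opNorm _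
    _ = ‖lpPairing b‖ := by rw [lp.norm_single (by norm_num), norm_one, mul_one]

section DiracSum

variable {E : Type*} [MeasurableSpace E]

noncomputable def diracSum (a : ℕ → ℝ) (x : ℕ → E) : Measure E :=
  Measure.sum fun k => ENNReal.ofReal (a k) • Measure.dirac (x k)

lemma isFiniteMeasure_diracSum {a : ℕ → ℝ} (ha : ∀ k, 0 ≤ a k) (hs : Summable a) (x : ℕ → E) :
    IsFiniteMeasure (diracSum a x) := by
  constructor
  simp [diracSum, Measure.sum_apply _ MeasurableSet.univ,
    ← ENNReal.ofReal_tsum_of_nonneg ha hs]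

variable [MeasurableSingletonClass E]

lemma hasSum_integral_diracSum {a : ℕ → ℝ} (ha : ∀ k, 0 ≤ a k) (hs : Summable a) (x : ℕ → E)
    {h : E → ℝ} {C : ℝ} (hC : ∀ k, |h (x k)| ≤ C) :
    HasSum (fun k => h (x k) * a k) (∫ y, h y ∂diracSum a x) := by
  have hsum : Summable fun k => (ENNReal.ofReal (a k)).toReal * ‖h (x k)‖ := by
    refine (hs.mul_right C).of_nonneg_of_le (fun k => by positivity) fun k => ?_
    rw [ENNReal.toReal_ofReal (ha k), Real.norm_eq_abs]
    exact mul_le_mul_of_nonneg_left (hC k) (ha k)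
  simpa [ENNReal.toReal_ofReal, ha, diracSum, mul_comm] using
    hasSum_integral_sum_dirac (fun k => ENNReal.ofReal_ne_top) hsum

lemma hasSum_eq_integral_diracSum_sub {c : ℕ → ℝ} (hc : Summable c) (x : ℕ → E)
    {h : E → ℝ} {C : ℝ} (hC : ∀ k, |h (x k)| ≤ C) :
    HasSum (fun k => h (x k) * c k)
      ((∫ y, h y ∂diracSum (fun k => (c k)⁺) x) - ∫ y, h y ∂diracSum (fun k => (c k)⁻) x) := by
  have hpos := hasSum_integral_diracSum (fun k => posPart_nonneg (c k)) hc.posPart x hC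
  have hneg := hasSum_integral_diracSum (fun k => negPart_nonneg (c k)) hc.negPart x hC
  simpa only [← mul_sub, posPart_sub_negPart] using hpos.sub hneg

theorem exists_norm_le_of_forall_integral_bounded [TopologicalSpace E] [OpensMeasurableSpace E]
    {F : ℕ → E →ᵇ ℝ}
    (hF : ∀ μ : Measure E, IsFiniteMeasure μ → ∃ C, ∀ n, |∫ x, F n x ∂μ| ≤ C) :
    ∃ M, ∀ n, ‖F n‖ ≤ M := by
  rcases isEmpty_or_nonempty E with hE | hE
  · exact ⟨0, fun n => (norm_eq_zero_of_empty (F n)).le⟩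
  choose x hx using fun n => exists_lt_of_lt_ciSup
    (show ‖F n‖ - 1 < ⨆ x, ‖F n x‖ from norm_eq_iSup_norm (F n) ▸ sub_one_lt _)
  let b (n : ℕ) : ℓ^∞(ℕ, ℝ) := ⟨fun k => F n (x k),
    memℓp_infty ⟨‖F n‖, forall_mem_range.2 fun k => (F n).norm_coe_le_norm _⟩⟩
  have hpointwise (c : ℓ^1(ℕ, ℝ)) : ∃ C, ∀ n, ‖lpPairing (b n) c‖ ≤ C := by
    have hc : Summable fun k => c k := (lp.memℓp c).summable_of_one
    obtain ⟨C₁, hC₁⟩ := hF _ (isFiniteMeasure_diracSum (fun k => posPart_nonneg _) hc.posPart x)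
    obtain ⟨C₂, hC₂⟩ := hF _ (isFiniteMeasure_diracSum (fun k => negPart_nonneg _) hc.negPart x)
    refine ⟨C₁ + C₂, fun n => ?_⟩
    rw [lpPairing_apply, (hasSum_eq_integral_diracSum_sub hc x
      (fun k => (F n).norm_coe_le_norm (x k))).tsum_eq, Real.norm_eq_abs]
    exact (abs_sub _ _).trans (add_le_add (hC₁ n) (hC₂ n))
  obtain ⟨C, hC⟩ := banach_steinhaus hpointwise
  refine ⟨C + 1, fun n => ?_⟩
  linarith [hx n, norm_apply_le_norm_lpPairing (b n) n, hC n]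

end DiracSum

section Main

variable {E : Type*} [MetricSpace E] [MeasurableSpace E] [BorelSpace E]

theorem TauKCauchySeq.exists_tendsto {F : ℕ → E →ᵇ ℝ} (hF : TauKCauchySeq E F) :
    ∃ g : E →ᵇ ℝ, Tendsto F atTop (@nhds _ (tauK E) g) := by
  obtain ⟨hK, hs⟩ := tauKCauchySeq_iff.1 hF
  choose g₀ hg₀ using fun x =>
    cauchySeq_tendsto_of_complete ((hK {x} isCompact_singleton).cauchySeq rfl)
  have hunif (K : Set E) (hK' : IsCompact K) :
      TendstoUniformlyOn (fun n => ⇑(F n)) g₀ atTop K :=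
    (hK K hK').tendstoUniformlyOn_of_tendsto fun x _ => hg₀ x
  have hcont : Continuous g₀ := CompactlyCoherentSpace.isCoherentWith.continuous_iff.2
    fun K hK' => (hunif K hK').continuousOn <|
      Frequently.of_forall fun n => (F n).continuous.continuousOn
  obtain ⟨M, hM⟩ := exists_norm_le_of_forall_integral_bounded (F := F) fun μ _ => by
    obtain ⟨C, hC⟩ := isBounded_iff_forall_norm_le.1 (hs μ.toSignedMeasure).isBounded_range
    exact ⟨C, fun n => by simpa [intSM'_toSignedMeasure] using hC _ (mem_range_self n)⟩
  have hg₀M (x : E) : ‖g₀ x‖ ≤ M :=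
    le_of_tendsto' (hg₀ x).norm fun n => ((F n).norm_coe_le_norm x).trans (hM n)
  exact ⟨.ofNormedAddCommGroup g₀ hcont M hg₀M, tendsto_tauK_of_tendstoUniformlyOn hM hunif⟩

theorem exists_uniformContinuous_tendsto_tauK (f : E →ᵇ ℝ) :
    ∃ F : ℕ → E →ᵇ ℝ, (∀ n, UniformContinuous ⇑(F n)) ∧ Tendsto F atTop (@nhds _ (tauK E) f) := by
  let F (n : ℕ) : E →ᵇ ℝ := .ofNormedAddCommGroup (lipschitzApprox f n)
    (lipschitzWith_lipschitzApprox f n).continuous ‖f‖ (abs_lipschitzApprox_le f n)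
  refine ⟨F, fun n => (lipschitzWith_lipschitzApprox f n).uniformContinuous,
    tendsto_tauK_of_tendstoUniformlyOn (fun n => norm_ofNormedAddCommGroup_le _ (norm_nonneg f) _)
      fun K hK => ?_⟩
  exact Monotone.tendstoUniformlyOn_of_forall_tendsto hK (fun n => (F n).continuous.continuousOn)
    (fun x _ m n hmn => monotone_lipschitzApprox f hmn x) f.continuous.continuousOn
    fun x _ => tendsto_lipschitzApprox f x

lemma eq_of_tendsto_tauK {F : ℕ → E →ᵇ ℝ} {f g : E →ᵇ ℝ}
    (hf : Tendsto F atTop (@nhds _ (tauK E) f)) (hg : Tendsto F atTop (@nhds _ (tauK E) g)) :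
    f = g :=
  ext fun x => tendsto_nhds_unique (tendsto_apply_of_tendsto_tauK hf x)
    (tendsto_apply_of_tendsto_tauK hg x)

end Main

/-- (UC_b(E), τ_K) is sequentially complete (every τ_K-Cauchy sequence of
bounded uniformly continuous functions τ_K-converges to a bounded uniformly continuous
function) iff UC_b(E) = C_b(E), i.e. every bounded continuous function on E is uniformly
continuous. -/
theorem stmt19 {E : Type*} [MetricSpace E] [MeasurableSpace E] [BorelSpace E] :
    (∀ f : ℕ → BoundedContinuousFunction E ℝ,
        (∀ n, UniformContinuous ⇑(f n)) →
        (∀ U ∈ @nhds _ (tauK E) (0 : BoundedContinuousFunction E ℝ),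
          ∃ N : ℕ, ∀ m ≥ N, ∀ n ≥ N, f m - f n ∈ U) →
        ∃ g : BoundedContinuousFunction E ℝ, UniformContinuous ⇑g ∧
          Tendsto f atTop (@nhds _ (tauK E) g)) ↔
      ∀ f : BoundedContinuousFunction E ℝ, UniformContinuous ⇑f := by
  refine ⟨fun hcomplete f => ?_, fun huc F _ hF => ?_⟩
  · obtain ⟨F, hFuc, hFf⟩ := exists_uniformContinuous_tendsto_tauK f
    obtain ⟨g, hg, hFg⟩ := hcomplete F hFuc (TauKCauchySeq.of_tendsto hFf)
    rwa [eq_of_tendsto_tauK hFf hFg]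
  · obtain ⟨g, hFg⟩ := TauKCauchySeq.exists_tendsto hF
    exact ⟨g, huc g, hFg⟩
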